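/- arXiv:0812.4167 — 2 statements merged into one kernel-verified Lean document; each statement's English description precedes it below -/
import Mathlib

section
/- A state ρ on H = H_A ⊗ H_B is a separable pure state, i.e. ρ = |ψ^A⟩⟨ψ^A| ⊗ |ψ^B⟩⟨ψ^B| for some unit vectors |ψ^A⟩ ∈ H_A and |ψ^B⟩ ∈ H_B, if and only if its multiset of operator Schmidt coefficients is {1, 0, 0, …, 0}. -/
open scoped Kronecker ComplexOrder
open Matrix Finset

/-- Hilbert-Schmidt inner product on matrices. -/
noncomputable def hsInner {n : Type*} [Fintype n] (A B : Matrix n n ℂ) : ℂ :=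
  (Aᴴ * B).trace

/-- Hilbert-Schmidt norm. -/
noncomputable def hsNorm {n : Type*} [Fintype n] (A : Matrix n n ℂ) : ℝ :=
  Real.sqrt (hsInner A A).re

/-- A density operator: positive semidefinite with unit trace. -/
def IsDensity {n : Type*} [Fintype n] (ρ : Matrix n n ℂ) : Prop :=
  ρ.PosSemidef ∧ ρ.trace = 1

/-- An operator Schmidt decomposition of a bipartite operator `C`:
`C = ∑ a, μ a • (E a ⊗ₖ F a)` with `μ a ≥ 0` and `E`, `F` orthonormal families
with respect to the Hilbert-Schmidt inner product. -/
def SchmidtDecomp {NA NB : ℕ} (C : Matrix (Fin NA × Fin NB) (Fin NA × Fin NB) ℂ)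
    (μ : Fin (min (NA ^ 2) (NB ^ 2)) → ℝ)
    (E : Fin (min (NA ^ 2) (NB ^ 2)) → Matrix (Fin NA) (Fin NA) ℂ)
    (F : Fin (min (NA ^ 2) (NB ^ 2)) → Matrix (Fin NB) (Fin NB) ℂ) : Prop :=
  (∀ a, 0 ≤ μ a) ∧
  (∀ a b, hsInner (E a) (E b) = if a = b then 1 else 0) ∧
  (∀ a b, hsInner (F a) (F b) = if a = b then 1 else 0) ∧
  C = ∑ a, (μ a : ℂ) • (E a ⊗ₖ F a)


/-!
Under vectorization the Hilbert–Schmidt inner product becomes the Euclidean one. If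
`ρ = X ⊗ Y` with `X`, `Y` rank-one projections, the coefficients of any decomposition are
`μ a = ⟨E a, X⟩ ⟨F a, Y⟩`, so `∑ μ a ^ 2 = ‖ρ‖² = 1`, while AM-GM and Bessel's inequality give
`∑ μ a ≤ 1`; non-negative reals with these two properties form a standard basis vector.
Conversely, some Schmidt decomposition exists (a singular value decomposition of the realigned
matrix), and the hypothesis forces `ρ = E ⊗ F`, hence `tr ρ² = 1`. Applied to the eigenvalues of
`ρ ≥ 0`, the same fact about reals shows `ρ = w w†`, and `w w† = E ⊗ F` makes `w` a product vector.
-/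
open scoped InnerProductSpace

section HilbertSchmidt

variable {m n : Type*} [Fintype m] [Fintype n]

lemma hsInner_eq_sum (A B : Matrix n n ℂ) :
    hsInner A B = ∑ p : n × n, star (A p.1 p.2) * B p.1 p.2 := by
  simp only [hsInner, trace, Matrix.diag, mul_apply, conjTranspose_apply, Fintype.sum_prod_type]
  exact sum_comm

lemma hsInner_kronecker (A C : Matrix m m ℂ) (B D : Matrix n n ℂ) :
    hsInner (A ⊗ₖ B) (C ⊗ₖ D) = hsInner A C * hsInner B D := by
  rw [hsInner, conjTranspose_kronecker, ← mul_kronecker_mul, trace_kronecker]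
  rfl

lemma hsInner_map_star (A B : Matrix n n ℂ) :
    hsInner (A.map star) (B.map star) = hsInner B A := by
  simp only [hsInner_eq_sum, map_apply, star_star]
  exact sum_congr rfl fun _ _ => mul_comm _ _

lemma hsInner_vecMulVec_star_self (ψ : n → ℂ) :
    hsInner (vecMulVec ψ (star ψ)) (vecMulVec ψ (star ψ)) = (star ψ ⬝ᵥ ψ) ^ 2 := by
  rw [hsInner, conjTranspose_vecMulVec, star_star, mul_vecMulVec, vecMulVec_mulVec,
    trace_vecMulVec]
  simp [sq, dotProduct_comm ψ]

@[simps apply symm_apply]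
def hsVec : Matrix n n ℂ ≃ₗ[ℂ] EuclideanSpace ℂ (n × n) where
  toFun A := WithLp.toLp 2 fun p => A p.1 p.2
  invFun x := of fun i j => x (i, j)
  map_add' _ _ := rfl
  map_smul' _ _ := rfl
  left_inv _ := rfl
  right_inv _ := rfl

lemma inner_hsVec (A B : Matrix n n ℂ) : ⟪hsVec A, hsVec B⟫_ℂ = hsInner A B := by
  rw [hsVec_apply, hsVec_apply, EuclideanSpace.inner_toLp_toLp, hsInner_eq_sum, dotProduct]
  exact sum_congr rfl fun _ _ => mul_comm _ _

lemma orthonormal_hsVec_comp_iff {ι : Type*} [DecidableEq ι] (E : ι → Matrix n n ℂ) :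
    Orthonormal ℂ (hsVec ∘ E) ↔ ∀ a b, hsInner (E a) (E b) = if a = b then 1 else 0 := by
  simp only [orthonormal_iff_ite, Function.comp_apply, inner_hsVec]

lemma Orthonormal.hsVec_kronecker {ι : Type*} {E : ι → Matrix m m ℂ} {F : ι → Matrix n n ℂ}
    (hE : Orthonormal ℂ (hsVec ∘ E)) (hF : Orthonormal ℂ (hsVec ∘ F)) :
    Orthonormal ℂ (hsVec ∘ fun a => E a ⊗ₖ F a) := by
  classical
  rw [orthonormal_hsVec_comp_iff] at *
  intro a b
  rw [hsInner_kronecker, hE, hF]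
  split_ifs <;> simp

lemma sum_norm_hsInner_sq_le {ι : Type*} [Fintype ι] {E : ι → Matrix n n ℂ}
    (hE : Orthonormal ℂ (hsVec ∘ E)) (X : Matrix n n ℂ) :
    ∑ a, ‖hsInner (E a) X‖ ^ 2 ≤ (hsInner X X).re := by
  calc ∑ a, ‖hsInner (E a) X‖ ^ 2 = ∑ a, ‖⟪(hsVec ∘ E) a, hsVec X⟫_ℂ‖ ^ 2 := by
        simp only [Function.comp_apply, inner_hsVec]
    _ ≤ ‖hsVec X‖ ^ 2 := hE.sum_inner_products_le _
    _ = (hsInner X X).re := by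
        rw [← inner_self_eq_norm_sq (𝕜 := ℂ), inner_hsVec, RCLike.re_to_complex]

end HilbertSchmidt

theorem exists_eq_piSingle_of_sum_le_one_of_sum_sq_eq_one {ι : Type*} [Fintype ι]
    [DecidableEq ι] {l : ι → ℝ} (h0 : ∀ i, 0 ≤ l i) (h1 : ∑ i, l i ≤ 1)
    (h2 : ∑ i, l i ^ 2 = 1) : ∃ i₀, l = Pi.single i₀ 1 := by
  have hle : ∀ i, l i ≤ 1 := fun i => (single_le_sum (fun j _ => h0 j) (mem_univ i)).trans h1
  have hgap : ∀ i, 0 ≤ l i - l i ^ 2 := fun i => by nlinarith [h0 i, hle i]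
  have hidem : ∀ i, l i - l i ^ 2 = 0 := by
    have : ∑ i, (l i - l i ^ 2) = 0 :=
      le_antisymm (by rw [sum_sub_distrib]; linarith) (sum_nonneg fun i _ => hgap i)
    exact fun i => (sum_eq_zero_iff_of_nonneg fun i _ => hgap i).1 this i (mem_univ i)
  obtain ⟨i₀, hi₀⟩ : ∃ i₀, l i₀ ≠ 0 := by
    by_contra! h
    simp [h] at h2
  have hl₀ : l i₀ = 1 := by
    have : l i₀ * (1 - l i₀) = 0 := by linear_combination hidem i₀
    exact (sub_eq_zero.1 ((mul_eq_zero.1 this).resolve_left hi₀)).symm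
  refine ⟨i₀, funext fun i => ?_⟩
  rcases eq_or_ne i i₀ with rfl | hi
  · simp [hl₀]
  · have := add_le_sum (fun j _ => h0 j) (mem_univ i) (mem_univ i₀) hi
    rw [Pi.single_eq_of_ne hi]
    linarith [h0 i]

theorem map_univ_val_eq_cons_replicate_zero_iff {ι M : Type*} [Fintype ι] [DecidableEq ι]
    [Zero M] {f : ι → M} {x : M} :
    univ.val.map f = x ::ₘ Multiset.replicate (Fintype.card ι - 1) 0 ↔
      ∃ i₀, f = Pi.single i₀ x := by
  have hsplit : ∀ i₀, univ.val.map f = f i₀ ::ₘ (univ.val.erase i₀).map f := fun i₀ => by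
    rw [← Multiset.map_cons, Multiset.cons_erase (mem_univ_val i₀)]
  have hmem : ∀ {i i₀ : ι}, i ∈ univ.val.erase i₀ ↔ i ≠ i₀ := by
    simp [univ.nodup.mem_erase_iff]
  constructor
  · intro h
    obtain ⟨i₀, -, hi₀⟩ := Multiset.mem_map.1 (h ▸ Multiset.mem_cons_self x _)
    rw [hsplit i₀, hi₀, Multiset.cons_inj_right, Multiset.eq_replicate] at h
    refine ⟨i₀, funext fun i => ?_⟩
    rcases eq_or_ne i i₀ with rfl | hi
    · simp [hi₀]
    · rw [Pi.single_eq_of_ne hi]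
      exact h.2 _ (Multiset.mem_map_of_mem f (hmem.2 hi))
  · rintro ⟨i₀, rfl⟩
    rw [hsplit i₀, Pi.single_eq_same, Multiset.cons_inj_right, Multiset.eq_replicate]
    refine ⟨by simp [Multiset.card_erase_of_mem], fun y hy => ?_⟩
    obtain ⟨i, hi, rfl⟩ := Multiset.mem_map.1 hy
    simp [hmem.1 hi]

theorem exists_eq_piSingle_of_kronecker_eq_sum {m n ι : Type*} [Fintype m] [Fintype n]
    [Fintype ι] [DecidableEq ι] {X : Matrix m m ℂ} {Y : Matrix n n ℂ}
    (hX : hsInner X X = 1) (hY : hsInner Y Y = 1) {μ : ι → ℝ} {E : ι → Matrix m m ℂ}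
    {F : ι → Matrix n n ℂ} (hμ : ∀ a, 0 ≤ μ a) (hE : Orthonormal ℂ (hsVec ∘ E))
    (hF : Orthonormal ℂ (hsVec ∘ F)) (h : X ⊗ₖ Y = ∑ a, (μ a : ℂ) • (E a ⊗ₖ F a)) :
    ∃ a₀, μ = Pi.single a₀ 1 := by
  have hG := hE.hsVec_kronecker hF
  have hvec : hsVec (X ⊗ₖ Y) = ∑ a, (μ a : ℂ) • (hsVec ∘ fun a => E a ⊗ₖ F a) a := by
    rw [h, map_sum]
    simp only [map_smul, Function.comp_apply]
  have hcoef : ∀ a, (μ a : ℂ) = hsInner (E a) X * hsInner (F a) Y := fun a => by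
    rw [← hsInner_kronecker, ← inner_hsVec, hvec]
    exact (hG.inner_right_fintype (fun a => (μ a : ℂ)) a).symm
  have hsq : ∑ a, μ a ^ 2 = 1 := by
    have : hsInner (X ⊗ₖ Y) (X ⊗ₖ Y) = ∑ a, ((μ a ^ 2 : ℝ) : ℂ) := by
      rw [← inner_hsVec, hvec, hG.inner_sum]
      simp [sq]
    rw [hsInner_kronecker, hX, hY, one_mul] at this
    exact_mod_cast this.symm
  have hsum : ∑ a, μ a ≤ 1 := by
    have hnorm : ∀ a, μ a = ‖hsInner (E a) X‖ * ‖hsInner (F a) Y‖ := fun a => by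
      rw [← norm_mul, ← hcoef, Complex.norm_real, Real.norm_of_nonneg (hμ a)]
    have hBX := sum_norm_hsInner_sq_le hE X
    have hBY := sum_norm_hsInner_sq_le hF Y
    rw [hX, Complex.one_re] at hBX
    rw [hY, Complex.one_re] at hBY
    calc ∑ a, μ a ≤ ∑ a, (‖hsInner (E a) X‖ ^ 2 + ‖hsInner (F a) Y‖ ^ 2) / 2 :=
          sum_le_sum fun a _ => by
            rw [hnorm a]; nlinarith [two_mul_le_add_sq ‖hsInner (E a) X‖ ‖hsInner (F a) Y‖]
      _ ≤ 1 := by rw [← sum_div, sum_add_distrib]; linarith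
  exact exists_eq_piSingle_of_sum_le_one_of_sum_sq_eq_one hμ hsum hsq

section Spectral

variable {𝕜 m n : Type*} [RCLike 𝕜] [Fintype n]

lemma EuclideanSpace.star_dotProduct_self (x : EuclideanSpace 𝕜 n) :
    star ⇑x ⬝ᵥ ⇑x = (‖x‖ : 𝕜) ^ 2 := by
  rw [← inner_self_eq_norm_sq_to_K, EuclideanSpace.inner_eq_star_dotProduct, dotProduct_comm]

lemma OrthonormalBasis.sum_vecMulVec_star_self [DecidableEq n]
    (b : OrthonormalBasis n 𝕜 (EuclideanSpace 𝕜 n)) :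
    ∑ i, vecMulVec ⇑(b i) (star ⇑(b i)) = 1 := by
  have hU := (EuclideanSpace.basisFun n 𝕜).toMatrix_orthonormalBasis_mem_unitary b
  rw [mem_unitaryGroup_iff] at hU
  ext j k
  simpa [mul_apply, Matrix.sum_apply, vecMulVec_apply, Module.Basis.toMatrix_apply] using
    congr_fun₂ hU j k

lemma Matrix.eq_sum_vecMulVec_mulVec_star [DecidableEq n] (M : Matrix m n 𝕜)
    (b : OrthonormalBasis n 𝕜 (EuclideanSpace 𝕜 n)) :
    M = ∑ i, vecMulVec (M *ᵥ ⇑(b i)) (star ⇑(b i)) := by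
  conv_lhs => rw [← M.mul_one, ← b.sum_vecMulVec_star_self]
  simp only [Matrix.mul_sum, mul_vecMulVec]

lemma Matrix.IsHermitian.eq_sum_eigenvalues_smul_vecMulVec [DecidableEq n] {A : Matrix n n 𝕜}
    (hA : A.IsHermitian) :
    A = ∑ i, (hA.eigenvalues i : 𝕜) •
      vecMulVec ⇑(hA.eigenvectorBasis i) (star ⇑(hA.eigenvectorBasis i)) := by
  conv_lhs => rw [eq_sum_vecMulVec_mulVec_star A hA.eigenvectorBasis]
  simp only [hA.mulVec_eigenvectorBasis, RCLike.real_smul_eq_coe_smul (K := 𝕜), smul_vecMulVec]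

end Spectral

theorem Matrix.PosSemidef.exists_eq_vecMulVec_star_of_hsInner_self_eq_one {n : Type*} [Fintype n]
    [DecidableEq n] {ρ : Matrix n n ℂ} (hρ : ρ.PosSemidef) (htr : ρ.trace = 1)
    (hsq : hsInner ρ ρ = 1) : ∃ w : n → ℂ, star w ⬝ᵥ w = 1 ∧ ρ = vecMulVec w (star w) := by
  have hH : ρ.IsHermitian := hρ.1
  have hspec := hH.eq_sum_eigenvalues_smul_vecMulVec
  have hunit : ∀ i, star ⇑(hH.eigenvectorBasis i) ⬝ᵥ ⇑(hH.eigenvectorBasis i) = 1 := fun i => by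
    rw [EuclideanSpace.star_dotProduct_self, hH.eigenvectorBasis.orthonormal.1 i]
    simp
  have h1 : ∑ i, hH.eigenvalues i = 1 := by
    rw [hH.trace_eq_sum_eigenvalues] at htr
    simp only [Complex.coe_algebraMap] at htr
    exact_mod_cast htr
  have h2 : ∑ i, hH.eigenvalues i ^ 2 = 1 := by
    rw [hsInner, hH.eq] at hsq
    conv_lhs at hsq => arg 1; arg 2; rw [hspec]
    simp only [Matrix.mul_sum, Matrix.mul_smul, mul_vecMulVec, trace_sum, trace_smul,
      trace_vecMulVec, hH.mulVec_eigenvectorBasis, dotProduct_comm _ (star _), dotProduct_smul,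
      hunit] at hsq
    exact_mod_cast (by simpa [sq] using hsq : ∑ i, ((hH.eigenvalues i : ℂ) ^ 2) = 1)
  obtain ⟨i₀, hl⟩ :=
    exists_eq_piSingle_of_sum_le_one_of_sum_sq_eq_one hρ.eigenvalues_nonneg h1.le h2
  refine ⟨hH.eigenvectorBasis i₀, hunit i₀, ?_⟩
  conv_lhs => rw [hspec]
  simp [hl, Pi.single_apply]

lemma exists_eq_mul_of_vecMulVec_star_eq_kronecker {m n : Type*} {w : m × n → ℂ} (hw : w ≠ 0)
    {A : Matrix m m ℂ} {B : Matrix n n ℂ} (h : vecMulVec w (star w) = A ⊗ₖ B) :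
    ∃ (a : m → ℂ) (b : n → ℂ), ∀ i k, w (i, k) = a i * b k := by
  obtain ⟨⟨i₀, k₀⟩, h₀⟩ := Function.ne_iff.1 hw
  refine ⟨fun i => A i i₀, fun k => B k k₀ / star (w (i₀, k₀)), fun i k => ?_⟩
  have := congr_fun₂ h (i, k) (i₀, k₀)
  simp only [vecMulVec_apply, kroneckerMap_apply, Pi.star_apply] at this
  rw [mul_div_assoc', eq_div_iff (star_ne_zero.2 h₀), this]

lemma exists_unit_factors_of_eq_mul {m n : Type*} [Fintype m] [Fintype n] {w : m × n → ℂ}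
    (hw : star w ⬝ᵥ w = 1) {a : m → ℂ} {b : n → ℂ} (hab : ∀ i k, w (i, k) = a i * b k) :
    ∃ (ψA : m → ℂ) (ψB : n → ℂ), star ψA ⬝ᵥ ψA = 1 ∧ star ψB ⬝ᵥ ψB = 1 ∧
      ∀ i k, w (i, k) = ψA i * ψB k := by
  have hsplit : star w ⬝ᵥ w = (star a ⬝ᵥ a) * (star b ⬝ᵥ b) := by
    simp only [dotProduct, Fintype.sum_prod_type, Pi.star_apply, hab, star_mul', sum_mul_sum]
    exact sum_congr rfl fun _ _ => sum_congr rfl fun _ _ => by ring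
  set r := ‖WithLp.toLp 2 a‖
  have ha : star a ⬝ᵥ a = (r : ℂ) ^ 2 := EuclideanSpace.star_dotProduct_self _
  have hr : (r : ℂ) ≠ 0 := by
    rintro h0
    rw [hw, ha, h0] at hsplit
    simp at hsplit
  -- Rescale only `a`, compensating in `b`, so that a single normalisation is needed.
  refine ⟨(r : ℂ)⁻¹ • a, (r : ℂ) • b, ?_, ?_, fun i k => ?_⟩
  · simp only [star_smul, smul_dotProduct, dotProduct_smul, ha, RCLike.star_def, map_inv₀,
      Complex.conj_ofReal, smul_eq_mul]
    field_simp
  · simp only [star_smul, smul_dotProduct, dotProduct_smul, RCLike.star_def,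
      Complex.conj_ofReal, smul_eq_mul]
    rw [hw, ha] at hsplit
    linear_combination -hsplit
  · simp only [Pi.smul_apply, smul_eq_mul, hab]
    field_simp

lemma vecMulVec_star_eq_kronecker_of_eq_mul {m n : Type*} {w : m × n → ℂ} {ψA : m → ℂ}
    {ψB : n → ℂ} (h : ∀ i k, w (i, k) = ψA i * ψB k) :
    vecMulVec w (star w) = vecMulVec ψA (star ψA) ⊗ₖ vecMulVec ψB (star ψB) := by
  ext ⟨i, k⟩ ⟨j, l⟩
  simp only [vecMulVec_apply, kroneckerMap_apply, Pi.star_apply, h, star_mul']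
  ring

section Orthogonal

variable {𝕜 E ι : Type*} [RCLike 𝕜] [NormedAddCommGroup E] [InnerProductSpace 𝕜 E]
  [FiniteDimensional 𝕜 E] [Fintype ι]

theorem Orthonormal.exists_orthonormal_extension_of_card_le
    (h : Fintype.card ι ≤ Module.finrank 𝕜 E) {v : ι → E} {s : Set ι}
    (hv : Orthonormal 𝕜 (s.domRestrict v)) : ∃ u : ι → E, Orthonormal 𝕜 u ∧ ∀ i ∈ s, u i = v i := by
  classical
  -- Pad `ι` with dummy indices up to the dimension, where the basis extension theorem applies.
  obtain ⟨b, hb⟩ := Orthonormal.exists_orthonormalBasis_extension_of_card_eq (𝕜 := 𝕜)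
    (ι := ι ⊕ Fin (Module.finrank 𝕜 E - Fintype.card ι)) (v := Sum.elim v 0)
    (s := Sum.inl '' s) (by simp; omega) (by
      rw [orthonormal_iff_ite] at hv ⊢
      rintro ⟨_, i, hi, rfl⟩ ⟨_, j, hj, rfl⟩
      simpa [Subtype.ext_iff] using hv ⟨i, hi⟩ ⟨j, hj⟩)
  exact ⟨b ∘ Sum.inl, b.orthonormal.comp _ Sum.inl_injective, fun i hi => hb _ ⟨i, hi, rfl⟩⟩

theorem exists_orthonormal_eq_norm_smul (h : Fintype.card ι ≤ Module.finrank 𝕜 E) {w : ι → E}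
    (hw : Pairwise fun i j => ⟪w i, w j⟫_𝕜 = 0) :
    ∃ u : ι → E, Orthonormal 𝕜 u ∧ ∀ i, w i = (‖w i‖ : 𝕜) • u i := by
  have hv : Orthonormal 𝕜 ({i | w i ≠ 0}.domRestrict fun i => (‖w i‖ : 𝕜)⁻¹ • w i) := by
    refine ⟨fun i => norm_smul_inv_norm i.2, fun i j hij => ?_⟩
    simp [Set.domRestrict, inner_smul_left, inner_smul_right, hw (Subtype.coe_ne_coe.2 hij)]
  obtain ⟨u, hu, hus⟩ := Orthonormal.exists_orthonormal_extension_of_card_le h hv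
  refine ⟨u, hu, fun i => ?_⟩
  by_cases hi : w i = 0
  · simp [hi]
  · rw [hus i hi, smul_smul, mul_inv_cancel₀ (by simpa using hi), one_smul]

end Orthogonal

section SVD

variable {𝕜 α β ι : Type*} [RCLike 𝕜] [Fintype α] [Fintype β] [Fintype ι]

theorem Matrix.exists_svd_of_card_le (R : Matrix α β 𝕜) (h : Fintype.card β ≤ Fintype.card α) :
    ∃ (μ : β → ℝ) (u : β → EuclideanSpace 𝕜 α) (v : β → EuclideanSpace 𝕜 β),
      (∀ i, 0 ≤ μ i) ∧ Orthonormal 𝕜 u ∧ Orthonormal 𝕜 v ∧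
      R = ∑ i, (μ i : 𝕜) • vecMulVec ⇑(u i) (star ⇑(v i)) := by
  classical
  have hH := isHermitian_conjTranspose_mul_self R
  set b := hH.eigenvectorBasis
  -- `⟪R bᵢ, R bⱼ⟫ = ⟪bᵢ, Rᴴ R bⱼ⟫ = λⱼ ⟪bᵢ, bⱼ⟫`
  have horth : Pairwise fun i j =>
      ⟪WithLp.toLp 2 (R *ᵥ ⇑(b i)), WithLp.toLp 2 (R *ᵥ ⇑(b j))⟫_𝕜 = 0 := by
    intro i j hij
    rw [EuclideanSpace.inner_toLp_toLp, dotProduct_comm, star_mulVec, ← dotProduct_mulVec,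
      mulVec_mulVec, hH.mulVec_eigenvectorBasis, dotProduct_smul, dotProduct_comm,
      ← EuclideanSpace.inner_eq_star_dotProduct, b.orthonormal.2 hij, smul_zero]
  obtain ⟨u, hu, hRu⟩ := exists_orthonormal_eq_norm_smul (by simpa using h) horth
  refine ⟨fun i => ‖WithLp.toLp 2 (R *ᵥ ⇑(b i))‖, u, b, fun _ => norm_nonneg _, hu,
    b.orthonormal, ?_⟩
  conv_lhs => rw [R.eq_sum_vecMulVec_mulVec_star b]
  refine sum_congr rfl fun i _ => ?_
  rw [← smul_vecMulVec]
  exact congr_arg (vecMulVec · _) (congr_arg WithLp.ofLp (hRu i))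

theorem Matrix.exists_svd (R : Matrix α β 𝕜)
    (hι : Fintype.card ι = min (Fintype.card α) (Fintype.card β)) :
    ∃ (μ : ι → ℝ) (u : ι → EuclideanSpace 𝕜 α) (v : ι → EuclideanSpace 𝕜 β),
      (∀ i, 0 ≤ μ i) ∧ Orthonormal 𝕜 u ∧ Orthonormal 𝕜 v ∧
      R = ∑ i, (μ i : 𝕜) • vecMulVec ⇑(u i) (star ⇑(v i)) := by
  rcases le_total (Fintype.card β) (Fintype.card α) with h | h
  · obtain ⟨μ, u, v, hμ, hu, hv, hR⟩ := R.exists_svd_of_card_le h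
    let e : ι ≃ β := Fintype.equivOfCardEq (by rw [hι, min_eq_right h])
    refine ⟨μ ∘ e, u ∘ e, v ∘ e, fun _ => hμ _, hu.comp _ e.injective, hv.comp _ e.injective, ?_⟩
    rw [hR, ← e.sum_comp]
    rfl
  · obtain ⟨μ, u, v, hμ, hu, hv, hR⟩ := Rᴴ.exists_svd_of_card_le h
    let e : ι ≃ α := Fintype.equivOfCardEq (by rw [hι, min_eq_left h])
    refine ⟨μ ∘ e, v ∘ e, u ∘ e, fun _ => hμ _, hv.comp _ e.injective, hu.comp _ e.injective, ?_⟩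
    rw [← conjTranspose_conjTranspose R, hR, conjTranspose_sum, ← e.sum_comp]
    simp [conjTranspose_smul]

end SVD

/-- Realignment `C (i, k) (j, l) ↦ R (i, j) (k, l)` turns an operator Schmidt decomposition of `C`
into a singular value decomposition of `R`. -/
theorem exists_schmidtDecomp {NA NB : ℕ} (C : Matrix (Fin NA × Fin NB) (Fin NA × Fin NB) ℂ) :
    ∃ μ E F, SchmidtDecomp C μ E F := by
  let R : Matrix (Fin NA × Fin NA) (Fin NB × Fin NB) ℂ := of fun p q => C (p.1, q.1) (p.2, q.2)
  obtain ⟨μ, u, v, hμ, hu, hv, hR⟩ :=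
    R.exists_svd (ι := Fin (min (NA ^ 2) (NB ^ 2))) (by simp [sq])
  refine ⟨μ, fun a => hsVec.symm (u a), fun a => (hsVec.symm (v a)).map star, hμ,
    (orthonormal_hsVec_comp_iff _).1 (by simpa [Function.comp_def] using hu), fun a b => ?_, ?_⟩
  · rw [hsInner_map_star, ← inner_hsVec, LinearEquiv.apply_symm_apply,
      LinearEquiv.apply_symm_apply, orthonormal_iff_ite.1 hv]
    simp only [@eq_comm _ b a]
  · ext ⟨i, k⟩ ⟨j, l⟩
    simpa [R, Matrix.sum_apply, vecMulVec_apply] using congr_fun₂ hR (i, j) (k, l)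

theorem stmt4_separable_pure_iff_schmidt_coefficients_general {NA NB : ℕ}
    (ρ : Matrix (Fin NA × Fin NB) (Fin NA × Fin NB) ℂ) (hρ : IsDensity ρ) :
    (∃ (ψA : Fin NA → ℂ) (ψB : Fin NB → ℂ),
        star ψA ⬝ᵥ ψA = 1 ∧ star ψB ⬝ᵥ ψB = 1 ∧
        ρ = Matrix.vecMulVec ψA (star ψA) ⊗ₖ Matrix.vecMulVec ψB (star ψB))
    ↔ (∀ (μ : Fin (min (NA ^ 2) (NB ^ 2)) → ℝ)
         (E : Fin (min (NA ^ 2) (NB ^ 2)) → Matrix (Fin NA) (Fin NA) ℂ)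
         (F : Fin (min (NA ^ 2) (NB ^ 2)) → Matrix (Fin NB) (Fin NB) ℂ),
         SchmidtDecomp ρ μ E F →
         Multiset.map μ Finset.univ.val
           = (1 : ℝ) ::ₘ Multiset.replicate (min (NA ^ 2) (NB ^ 2) - 1) (0 : ℝ)) := by
  have hmap (μ : Fin (min (NA ^ 2) (NB ^ 2)) → ℝ) :
      Multiset.map μ univ.val = 1 ::ₘ Multiset.replicate (min (NA ^ 2) (NB ^ 2) - 1) 0 ↔
        ∃ a₀, μ = Pi.single a₀ 1 := by
    rw [← map_univ_val_eq_cons_replicate_zero_iff, Fintype.card_fin]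
  simp only [hmap]
  constructor
  · rintro ⟨ψA, ψB, hψA, hψB, rfl⟩ μ E F ⟨hμ, hE, hF, hdec⟩
    refine exists_eq_piSingle_of_kronecker_eq_sum ?_ ?_ hμ
      ((orthonormal_hsVec_comp_iff E).2 hE) ((orthonormal_hsVec_comp_iff F).2 hF) hdec
    · rw [hsInner_vecMulVec_star_self, hψA, one_pow]
    · rw [hsInner_vecMulVec_star_self, hψB, one_pow]
  · intro H
    obtain ⟨μ, E, F, hdec⟩ := exists_schmidtDecomp ρ
    obtain ⟨a₀, rfl⟩ := H μ E F hdec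
    obtain ⟨-, hE, hF, hρEF⟩ := hdec
    replace hρEF : ρ = E a₀ ⊗ₖ F a₀ := by simpa [Pi.single_apply] using hρEF
    obtain ⟨w, hw, rfl⟩ := hρ.1.exists_eq_vecMulVec_star_of_hsInner_self_eq_one hρ.2
      (by rw [hρEF, hsInner_kronecker, hE, hF]; simp)
    obtain ⟨a, b, hab⟩ := exists_eq_mul_of_vecMulVec_star_eq_kronecker
      (by rintro rfl; simp at hw) hρEF
    obtain ⟨ψA, ψB, hψA, hψB, hψ⟩ := exists_unit_factors_of_eq_mul hw hab
    exact ⟨ψA, ψB, hψA, hψB, vecMulVec_star_eq_kronecker_of_eq_mul hψ⟩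

/-- A bipartite state is a separable pure state if and only if its multiset of operator
Schmidt coefficients is {1, 0, 0, …, 0}. -/
theorem stmt4_separable_pure_iff_schmidt_coefficients {NA NB : ℕ} (hA : 2 ≤ NA) (hB : 2 ≤ NB)
    (ρ : Matrix (Fin NA × Fin NB) (Fin NA × Fin NB) ℂ) (hρ : IsDensity ρ) :
    (∃ (ψA : Fin NA → ℂ) (ψB : Fin NB → ℂ),
        star ψA ⬝ᵥ ψA = 1 ∧ star ψB ⬝ᵥ ψB = 1 ∧
        ρ = Matrix.vecMulVec ψA (star ψA) ⊗ₖ Matrix.vecMulVec ψB (star ψB))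
    ↔ (∀ (μ : Fin (min (NA ^ 2) (NB ^ 2)) → ℝ)
         (E : Fin (min (NA ^ 2) (NB ^ 2)) → Matrix (Fin NA) (Fin NA) ℂ)
         (F : Fin (min (NA ^ 2) (NB ^ 2)) → Matrix (Fin NB) (Fin NB) ℂ),
         SchmidtDecomp ρ μ E F →
         Multiset.map μ Finset.univ.val
           = (1 : ℝ) ::ₘ Multiset.replicate (min (NA ^ 2) (NB ^ 2) - 1) (0 : ℝ)) :=
  stmt4_separable_pure_iff_schmidt_coefficients_general ρ hρ
end

section
/- (Main theorem) Fix n ≥ 1 and let 𝔈_1^A, …, 𝔈_n^A : L(H_A) → L(H_A) and 𝔈_1^B, …, 𝔈_n^B : L(H_B) → L(H_B) be maps that are either all complex-linear or all conjugate-linear, and suppose that for some ε^A, ε^B ≥ 0: Σ_{k=1}^{n} ‖𝔈_k^A(σ_k^A)‖_HS² ≤ n ε^A for all density operators σ_1^A, …, σ_n^A on H_A, and Σ_{k=1}^{n} ‖𝔈_k^B(σ_k^B)‖_HS² ≤ n ε^B for all density operators σ_1^B, …, σ_n^B on H_B. Define, for a state ρ on H_A ⊗ H_B with marginals ρ_A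 = tr_B(ρ), ρ_B = tr_A(ρ), the transformed operator 𝔈(ρ) := n⁻¹ (Σ_{k=1}^{n} 𝔈_k^A ⊗ 𝔈_k^B)(ρ) + n⁻¹ (Σ_{k ≠ l} 𝔈_k^A ⊗ 𝔈_l^B)(ρ_A ⊗ ρ_B). Then for every separable state ρ: ‖𝔈(ρ)‖_CCN ≤ √[ (ε^A + (1/n) Σ_{k<l} (⟨𝔈_k^A(ρ_A), 𝔈_l^A(ρ_A)⟩_HS + conj.)) · (ε^B + (1/n) Σ_{k<l} (⟨𝔈_k^B(ρ_B), 𝔈_l^B(ρ_B)⟩_HS + conj.)) ]. -/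
/-
Write ρ = Σᵢ pᵢ ρᵢᴬ ⊗ ρᵢᴮ, aₖᵢ = 𝔈ₖᴬ(ρᵢᴬ), bₖᵢ = 𝔈ₖᴮ(ρᵢᴮ), and āₖ = Σᵢ pᵢ aₖᵢ = 𝔈ₖᴬ(ρ_A),
b̄ₖ = 𝔈ₖᴮ(ρ_B). The covariance identity Σᵢ pᵢ (xᵢ - x̄) ⊗ (yᵢ - ȳ) = Σᵢ pᵢ xᵢ ⊗ yᵢ - x̄ ⊗ ȳ
rewrites n 𝔈(ρ) as the explicit positive combination of product operators
Σₖᵢ pᵢ (aₖᵢ - āₖ) ⊗ (bₖᵢ - b̄ₖ) + (Σₖ āₖ) ⊗ (Σₖ b̄ₖ), so by Cauchy–Schwarz its CCN is at most the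
geometric mean of the two weighted sums of squared HS norms. The same identity for the
HS inner product turns the A-side sum into Σᵢ pᵢ Σₖ ‖aₖᵢ‖² + Σ_{k≠l} Re⟨āₖ, āₗ⟩, whose first
term is at most n εᴬ by the hypothesis applied to the constant family ρᵢᴬ; likewise for B.
-/

open scoped Kronecker ComplexOrder
open Matrix Finset

/-- A separable bipartite state: a convex combination of product density operators. -/
def IsSeparableState {NA NB : ℕ} (ρ : Matrix (Fin NA × Fin NB) (Fin NA × Fin NB) ℂ) : Prop :=
  ∃ (m : ℕ) (p : Fin m → ℝ)
    (ρA : Fin m → Matrix (Fin NA) (Fin NA) ℂ) (ρB : Fin m → Matrix (Fin NB) (Fin NB) ℂ),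
    (∀ i, 0 < p i) ∧ (∑ i, p i = 1) ∧ (∀ i, IsDensity (ρA i)) ∧ (∀ i, IsDensity (ρB i)) ∧
    ρ = ∑ i, (p i : ℂ) • (ρA i ⊗ₖ ρB i)

/-- The computable cross norm (CCN) on bipartite operators. -/
noncomputable def ccn {NA NB : ℕ} (C : Matrix (Fin NA × Fin NB) (Fin NA × Fin NB) ℂ) : ℝ :=
  sInf { r : ℝ | ∃ (n : ℕ) (A : Fin n → Matrix (Fin NA) (Fin NA) ℂ)
    (B : Fin n → Matrix (Fin NB) (Fin NB) ℂ),
    C = ∑ k, A k ⊗ₖ B k ∧ r = ∑ k, hsNorm (A k) * hsNorm (B k) }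

/-- The action of the tensor product `F ⊗ G` of two (jointly linear or conjugate-linear)
superoperators on a bipartite operator, written in terms of matrix blocks. -/
noncomputable def tensorApply {NA NB : ℕ} {σ : ℂ →+* ℂ}
    (F : Matrix (Fin NA) (Fin NA) ℂ →ₛₗ[σ] Matrix (Fin NA) (Fin NA) ℂ)
    (G : Matrix (Fin NB) (Fin NB) ℂ →ₛₗ[σ] Matrix (Fin NB) (Fin NB) ℂ)
    (M : Matrix (Fin NA × Fin NB) (Fin NA × Fin NB) ℂ) :
    Matrix (Fin NA × Fin NB) (Fin NA × Fin NB) ℂ :=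
  ∑ b : Fin NB, ∑ b' : Fin NB,
    (F (Matrix.of fun i i' => M (i, b) (i', b'))) ⊗ₖ (G (Matrix.single b b' 1))

/-- The marginal (reduced density operator) of a bipartite operator on the A-side. -/
noncomputable def margA {NA NB : ℕ} (ρ : Matrix (Fin NA × Fin NB) (Fin NA × Fin NB) ℂ) :
    Matrix (Fin NA) (Fin NA) ℂ :=
  Matrix.of fun i i' => ∑ b : Fin NB, ρ (i, b) (i', b)

/-- The marginal (reduced density operator) of a bipartite operator on the B-side. -/
noncomputable def margB {NA NB : ℕ} (ρ : Matrix (Fin NA × Fin NB) (Fin NA × Fin NB) ℂ) :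
    Matrix (Fin NB) (Fin NB) ℂ :=
  Matrix.of fun b b' => ∑ i : Fin NA, ρ (i, b) (i, b')


theorem sum_offDiag_eq_sum_sub_sum_diag {κ G : Type*} [Fintype κ] [DecidableEq κ] [AddCommGroup G]
    (g : κ → κ → G) :
    ∑ q ∈ univ.offDiag, g q.1 q.2 = ∑ k, ∑ l, g k l - ∑ k, g k k := by
  rw [eq_sub_iff_add_eq, ← sum_product' univ univ g, ← diag_union_offDiag,
    sum_union (disjoint_diag_offDiag _), sum_diag, add_comm]

namespace LinearMap

variable {R M N P ι κ : Type*} [CommRing R] [AddCommGroup M] [Module R M] [AddCommGroup N]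
  [Module R N] [AddCommGroup P] [Module R P] [Fintype ι] [Fintype κ]
  (β : M →ₗ[R] N →ₗ[R] P) {p : ι → R}

theorem sum_smul_apply₂_sub_mean (hp : ∑ i, p i = 1) (a : ι → M) (b : ι → N) :
    ∑ i, p i • β (a i - ∑ j, p j • a j) (b i - ∑ j, p j • b j)
      = ∑ i, p i • β (a i) (b i) - β (∑ i, p i • a i) (∑ i, p i • b i) := by
  set a' := ∑ j, p j • a j
  set b' := ∑ j, p j • b j
  have hleft : ∑ i, p i • β (a i) b' = β a' b' := by
    simp only [a', map_sum, map_smul, sum_apply, smul_apply]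
  have hright : ∑ i, p i • β a' (b i) = β a' b' := by
    simp only [b', map_sum, map_smul]
  simp only [map_sub, sub_apply, smul_sub, sum_sub_distrib, hleft, hright,
    ← sum_smul, hp, one_smul]
  abel

theorem sum_sum_smul_apply₂_add_sum_offDiag [DecidableEq κ] (hp : ∑ i, p i = 1)
    (a : κ → ι → M) (b : κ → ι → N) :
    ∑ k, ∑ i, p i • β (a k i) (b k i)
        + ∑ q ∈ univ.offDiag, β (∑ i, p i • a q.1 i) (∑ i, p i • b q.2 i)
      = ∑ k, ∑ i, p i • β (a k i - ∑ j, p j • a k j) (b k i - ∑ j, p j • b k j)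
        + β (∑ k, ∑ i, p i • a k i) (∑ k, ∑ i, p i • b k i) := by
  have hprod (x : κ → M) (y : κ → N) : β (∑ k, x k) (∑ l, y l) = ∑ k, ∑ l, β (x k) (y l) := by
    rw [map_sum₂]; simp only [map_sum]
  rw [sum_offDiag_eq_sum_sub_sum_diag (fun k l => β (∑ i, p i • a k i) (∑ i, p i • b l i)),
    hprod]
  simp only [sum_smul_apply₂_sub_mean β hp, sum_sub_distrib]
  abel

end LinearMap

theorem sum_offDiag_eq_sum_lt_two_mul {κ S : Type*} [Fintype κ] [LinearOrder κ] [Semiring S]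
    (f : κ → κ → S) (hf : ∀ k l, f k l = f l k) :
    ∑ q ∈ univ.offDiag, f q.1 q.2
      = ∑ q ∈ univ.filter (fun q : κ × κ => q.1 < q.2), 2 * f q.1 q.2 := by
  have hlt : univ.offDiag.filter (fun q : κ × κ => q.1 < q.2)
      = univ.filter (fun q : κ × κ => q.1 < q.2) := by
    ext q; simpa using ne_of_lt
  have hswap : ∑ q ∈ univ.offDiag.filter (fun q : κ × κ => ¬ q.1 < q.2), f q.1 q.2
      = ∑ q ∈ univ.offDiag.filter (fun q : κ × κ => q.1 < q.2), f q.1 q.2 :=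
    sum_nbij' Prod.swap Prod.swap (by grind) (by grind) (by simp) (by simp) (fun q _ => hf _ _)
  rw [← sum_filter_add_sum_filter_not _ (fun q : κ × κ => q.1 < q.2), hswap, hlt,
    ← sum_add_distrib]
  simp only [two_mul]

section HilbertSchmidt

variable {d : Type*} [Fintype d]

theorem hsInner_self_re_nonneg (A : Matrix d d ℂ) : 0 ≤ (hsInner A A).re :=
  (Complex.nonneg_iff.mp (posSemidef_conjTranspose_mul_self A).trace_nonneg).1

theorem hsNorm_nonneg (A : Matrix d d ℂ) : 0 ≤ hsNorm A := Real.sqrt_nonneg _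

theorem hsNorm_sq (A : Matrix d d ℂ) : hsNorm A ^ 2 = (hsInner A A).re :=
  Real.sq_sqrt (hsInner_self_re_nonneg A)

theorem hsNorm_real_smul (r : ℝ) (A : Matrix d d ℂ) : hsNorm (r • A) = |r| * hsNorm A := by
  rw [hsNorm, hsNorm, ← Real.sqrt_sq_eq_abs, ← Real.sqrt_mul (sq_nonneg r)]
  simp [hsInner, trace_smul, smul_smul, sq]

theorem hsInner_re_comm (A B : Matrix d d ℂ) : (hsInner B A).re = (hsInner A B).re := by
  rw [hsInner, hsInner, ← conjTranspose_conjTranspose A, ← conjTranspose_mul,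
    trace_conjTranspose, conjTranspose_conjTranspose]
  rfl

noncomputable def hsInnerRe : Matrix d d ℂ →ₗ[ℝ] Matrix d d ℂ →ₗ[ℝ] ℝ :=
  LinearMap.mk₂ ℝ (fun A B => (hsInner A B).re)
    (fun A A' B => by simp [hsInner, add_mul])
    (fun r A B => by simp [hsInner, trace_smul])
    (fun A B B' => by simp [hsInner, mul_add])
    (fun r A B => by simp [hsInner, trace_smul])

@[simp]
theorem hsInnerRe_apply (A B : Matrix d d ℂ) : hsInnerRe A B = (hsInner A B).re := rfl

end HilbertSchmidt

theorem RingHom.apply_ofReal_of_eq_id_or_conj {σ : ℂ →+* ℂ}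
    (hσ : σ = RingHom.id ℂ ∨ σ = starRingEnd ℂ) (r : ℝ) : σ r = r := by
  rcases hσ with rfl | rfl <;> simp

theorem LinearMap.map_real_smul_of_apply_ofReal {M N : Type*} [AddCommGroup M] [Module ℂ M]
    [AddCommGroup N] [Module ℂ N] {σ : ℂ →+* ℂ} (hσ : ∀ r : ℝ, σ r = r) (f : M →ₛₗ[σ] N)
    (r : ℝ) (x : M) : f (r • x) = r • f x := by
  rw [← Complex.coe_smul, map_smulₛₗ, hσ, Complex.coe_smul]

namespace Matrix

variable {α ι l m n p : Type*} [NonUnitalNonAssocSemiring α]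

theorem sum_kronecker (s : Finset ι) (A : ι → Matrix l m α) (B : Matrix n p α) :
    (∑ i ∈ s, A i) ⊗ₖ B = ∑ i ∈ s, A i ⊗ₖ B := by
  ext; simp [Matrix.sum_apply, sum_mul]

theorem kronecker_sum (s : Finset ι) (A : Matrix l m α) (B : ι → Matrix n p α) :
    A ⊗ₖ (∑ i ∈ s, B i) = ∑ i ∈ s, A ⊗ₖ B i := by
  ext; simp [Matrix.sum_apply, mul_sum]

end Matrix

section TensorApply

variable {NA NB : ℕ} {σ : ℂ →+* ℂ}
  (F : Matrix (Fin NA) (Fin NA) ℂ →ₛₗ[σ] Matrix (Fin NA) (Fin NA) ℂ)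
  (G : Matrix (Fin NB) (Fin NB) ℂ →ₛₗ[σ] Matrix (Fin NB) (Fin NB) ℂ)

theorem tensorApply_kronecker (A : Matrix (Fin NA) (Fin NA) ℂ) (B : Matrix (Fin NB) (Fin NB) ℂ) :
    tensorApply F G (A ⊗ₖ B) = F A ⊗ₖ G B := by
  have hblock (b b' : Fin NB) :
      (Matrix.of fun i i' => (A ⊗ₖ B) (i, b) (i', b')) = B b b' • A := by
    ext i i'; simp [mul_comm]
  have hB : B = ∑ b, ∑ b', B b b' • single b b' (1 : ℂ) := by
    conv_lhs => rw [matrix_eq_sum_single B]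
    simp [smul_single]
  conv_rhs => rw [hB]
  simp only [tensorApply, hblock, map_sum, map_smulₛₗ, kronecker_sum, kronecker_smul,
    smul_kronecker]

theorem tensorApply_sum {ι : Type*} (s : Finset ι)
    (M : ι → Matrix (Fin NA × Fin NB) (Fin NA × Fin NB) ℂ) :
    tensorApply F G (∑ i ∈ s, M i) = ∑ i ∈ s, tensorApply F G (M i) := by
  have hblock (b b' : Fin NB) : (Matrix.of fun i i' => (∑ j ∈ s, M j) (i, b) (i', b'))
      = ∑ j ∈ s, Matrix.of fun i i' => M j (i, b) (i', b') := by
    ext i i'; simp [Matrix.sum_apply]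
  simp only [tensorApply, hblock, map_sum, sum_kronecker]
  exact (sum_congr rfl fun _ _ => sum_comm).trans sum_comm

theorem tensorApply_real_smul (hσ : ∀ r : ℝ, σ r = r) (r : ℝ)
    (M : Matrix (Fin NA × Fin NB) (Fin NA × Fin NB) ℂ) :
    tensorApply F G (r • M) = r • tensorApply F G M := by
  have hblock (b b' : Fin NB) : (Matrix.of fun i i' => (r • M) (i, b) (i', b'))
      = r • Matrix.of fun i i' => M (i, b) (i', b') := by
    ext i i'; simp
  simp only [tensorApply, hblock, LinearMap.map_real_smul_of_apply_ofReal hσ, smul_kronecker,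
    smul_sum]

end TensorApply

section Marginals

variable {ι : Type*} [Fintype ι] {NA NB : ℕ} (p : ι → ℝ)
  (ρA : ι → Matrix (Fin NA) (Fin NA) ℂ) (ρB : ι → Matrix (Fin NB) (Fin NB) ℂ)

theorem margA_sum_smul_kronecker (hρB : ∀ i, (ρB i).trace = 1) :
    margA (∑ i, p i • ρA i ⊗ₖ ρB i) = ∑ i, p i • ρA i := by
  ext a a'
  have htr (i : ι) : ∑ b, ρB i b b = 1 := hρB i
  simp only [margA, of_apply, Matrix.sum_apply, Matrix.smul_apply, kronecker_apply]
  rw [sum_comm]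
  refine sum_congr rfl fun i _ => ?_
  simp [← mul_sum, htr]

theorem margB_sum_smul_kronecker (hρA : ∀ i, (ρA i).trace = 1) :
    margB (∑ i, p i • ρA i ⊗ₖ ρB i) = ∑ i, p i • ρB i := by
  ext b b'
  have htr (i : ι) : ∑ a, ρA i a a = 1 := hρA i
  simp only [margB, of_apply, Matrix.sum_apply, Matrix.smul_apply, kronecker_apply]
  rw [sum_comm]
  refine sum_congr rfl fun i _ => ?_
  simp [← mul_sum, ← sum_mul, htr]

end Marginals

theorem sum_tensorApply_add_offDiag_eq {ι κ : Type*} [Fintype ι] [Fintype κ] [DecidableEq κ]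
    {NA NB : ℕ} {σ : ℂ →+* ℂ} (hσ : ∀ r : ℝ, σ r = r)
    (EA : κ → (Matrix (Fin NA) (Fin NA) ℂ →ₛₗ[σ] Matrix (Fin NA) (Fin NA) ℂ))
    (EB : κ → (Matrix (Fin NB) (Fin NB) ℂ →ₛₗ[σ] Matrix (Fin NB) (Fin NB) ℂ))
    {p : ι → ℝ} (hp : ∑ i, p i = 1)
    (ρA : ι → Matrix (Fin NA) (Fin NA) ℂ) (ρB : ι → Matrix (Fin NB) (Fin NB) ℂ) :
    ∑ k, tensorApply (EA k) (EB k) (∑ i, p i • ρA i ⊗ₖ ρB i)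
        + ∑ q ∈ univ.offDiag,
            tensorApply (EA q.1) (EB q.2) ((∑ i, p i • ρA i) ⊗ₖ (∑ i, p i • ρB i))
      = ∑ k, ∑ i, p i • (EA k (ρA i) - EA k (∑ j, p j • ρA j))
            ⊗ₖ (EB k (ρB i) - EB k (∑ j, p j • ρB j))
        + (∑ k, EA k (∑ i, p i • ρA i)) ⊗ₖ (∑ k, EB k (∑ i, p i • ρB i)) := by
  simp only [tensorApply_sum, tensorApply_real_smul _ _ hσ, tensorApply_kronecker, map_sum,
    LinearMap.map_real_smul_of_apply_ofReal hσ]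
  have hkron (X : Matrix (Fin NA) (Fin NA) ℂ) (Y : Matrix (Fin NB) (Fin NB) ℂ) :
      kroneckerBilinear (R := ℝ) X Y = X ⊗ₖ Y := rfl
  simpa only [hkron] using LinearMap.sum_sum_smul_apply₂_add_sum_offDiag
    (kroneckerBilinear (R := ℝ)) hp (fun k i => EA k (ρA i)) (fun k i => EB k (ρB i))

section CrossNorm

variable {NA NB : ℕ} {J : Type*} [Fintype J]

theorem ccn_sum_kronecker_le (A : J → Matrix (Fin NA) (Fin NA) ℂ)
    (B : J → Matrix (Fin NB) (Fin NB) ℂ) :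
    ccn (∑ j, A j ⊗ₖ B j) ≤ ∑ j, hsNorm (A j) * hsNorm (B j) := by
  refine csInf_le ⟨0, ?_⟩ ⟨Fintype.card J, A ∘ (Fintype.equivFin J).symm,
    B ∘ (Fintype.equivFin J).symm, ?_, ?_⟩
  · rintro r ⟨n, A', B', -, rfl⟩
    exact sum_nonneg fun k _ => mul_nonneg (hsNorm_nonneg _) (hsNorm_nonneg _)
  · exact (Fintype.sum_equiv (Fintype.equivFin J).symm _ _ fun k => rfl).symm
  · exact (Fintype.sum_equiv (Fintype.equivFin J).symm _ _ fun k => rfl).symm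

theorem ccn_sum_smul_kronecker_le {w : J → ℝ} (hw : ∀ j, 0 ≤ w j)
    (A : J → Matrix (Fin NA) (Fin NA) ℂ) (B : J → Matrix (Fin NB) (Fin NB) ℂ) :
    ccn (∑ j, w j • A j ⊗ₖ B j)
      ≤ √(∑ j, w j * hsNorm (A j) ^ 2) * √(∑ j, w j * hsNorm (B j) ^ 2) := by
  have hsplit (j : J) : w j • A j ⊗ₖ B j = (√(w j) • A j) ⊗ₖ (√(w j) • B j) := by
    rw [smul_kronecker, kronecker_smul, smul_smul, Real.mul_self_sqrt (hw j)]
  have hnorm (j : J) (X : Matrix (Fin NA) (Fin NA) ℂ) (Y : Matrix (Fin NB) (Fin NB) ℂ) :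
      hsNorm (√(w j) • X) * hsNorm (√(w j) • Y)
        = √(w j * hsNorm X ^ 2) * √(w j * hsNorm Y ^ 2) := by
    simp only [hsNorm_real_smul, Real.sqrt_mul (hw j), abs_of_nonneg (Real.sqrt_nonneg _),
      Real.sqrt_sq (hsNorm_nonneg _)]
  calc ccn (∑ j, w j • A j ⊗ₖ B j)
      ≤ ∑ j, √(w j * hsNorm (A j) ^ 2) * √(w j * hsNorm (B j) ^ 2) := by
        rw [sum_congr rfl fun j _ => hsplit j]
        exact (ccn_sum_kronecker_le _ _).trans_eq (sum_congr rfl fun j _ => hnorm j _ _)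
    _ ≤ _ := Real.sum_sqrt_mul_sqrt_le _ (fun j => mul_nonneg (hw j) (sq_nonneg _))
        (fun j => mul_nonneg (hw j) (sq_nonneg _))

end CrossNorm

theorem ccn_smul_sum_sum_add_le {NA NB : ℕ} {κ ι : Type*} [Fintype κ] [Fintype ι] {c : ℝ}
    (hc : 0 ≤ c) {p : ι → ℝ} (hp : ∀ i, 0 ≤ p i)
    (C : κ → ι → Matrix (Fin NA) (Fin NA) ℂ) (D : κ → ι → Matrix (Fin NB) (Fin NB) ℂ)
    (A : Matrix (Fin NA) (Fin NA) ℂ) (B : Matrix (Fin NB) (Fin NB) ℂ) :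
    ccn (c • (∑ k, ∑ i, p i • C k i ⊗ₖ D k i + A ⊗ₖ B))
      ≤ √(c * (∑ k, ∑ i, p i * hsNorm (C k i) ^ 2 + hsNorm A ^ 2))
        * √(c * (∑ k, ∑ i, p i * hsNorm (D k i) ^ 2 + hsNorm B ^ 2)) := by
  have := ccn_sum_smul_kronecker_le (J := Option (κ × ι))
    (w := fun j => c * j.elim 1 (fun x => p x.2))
    (by rintro (_ | x) <;> simp [hc, hp, mul_nonneg])
    (fun j => j.elim A (fun x => C x.1 x.2)) (fun j => j.elim B (fun x => D x.1 x.2))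
  simpa [Fintype.sum_option, Fintype.sum_prod_type, mul_sum, smul_sum, mul_assoc, smul_smul,
    mul_add, add_comm] using this

theorem hsNorm_variance_bound {d ι : Type*} [Fintype d] [Fintype ι] {n : ℕ} (hn : n ≠ 0) {ε : ℝ}
    {p : ι → ℝ} (hp : ∀ i, 0 ≤ p i) (hpsum : ∑ i, p i = 1) {a : Fin n → ι → Matrix d d ℂ}
    (ha : ∀ i, ∑ k, hsNorm (a k i) ^ 2 ≤ n * ε) :
    (n : ℝ)⁻¹ * (∑ k, ∑ i, p i * hsNorm (a k i - ∑ j, p j • a k j) ^ 2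
        + hsNorm (∑ k, ∑ i, p i • a k i) ^ 2)
      ≤ ε + (n : ℝ)⁻¹ * ∑ q ∈ univ.filter (fun q : Fin n × Fin n => q.1 < q.2),
          2 * (hsInner (∑ i, p i • a q.1 i) (∑ i, p i • a q.2 i)).re := by
  have hcov := LinearMap.sum_sum_smul_apply₂_add_sum_offDiag hsInnerRe hpsum a a
  simp only [hsInnerRe_apply, smul_eq_mul, ← hsNorm_sq] at hcov
  rw [← sum_offDiag_eq_sum_lt_two_mul
    (fun k l => (hsInner (∑ i, p i • a k i) (∑ i, p i • a l i)).re)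
    fun k l => hsInner_re_comm _ _, ← hcov]
  have hdiag : ∑ k, ∑ i, p i * hsNorm (a k i) ^ 2 ≤ n * ε :=
    calc ∑ k, ∑ i, p i * hsNorm (a k i) ^ 2 = ∑ i, p i * ∑ k, hsNorm (a k i) ^ 2 := by
          rw [sum_comm]; simp only [mul_sum]
      _ ≤ ∑ i, p i * (n * ε) := sum_le_sum fun i _ => mul_le_mul_of_nonneg_left (ha i) (hp i)
      _ = n * ε := by rw [← sum_mul, hpsum, one_mul]
  have hn' : (n : ℝ) ≠ 0 := Nat.cast_ne_zero.mpr hn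
  calc _ ≤ (n : ℝ)⁻¹ * (n * ε + ∑ q ∈ univ.offDiag,
          (hsInner (∑ i, p i • a q.1 i) (∑ i, p i • a q.2 i)).re) := by gcongr
    _ = _ := by field_simp

theorem stmt14_main_theorem_general {NA NB : ℕ}
    (n : ℕ) (hn : 1 ≤ n) (σ : ℂ →+* ℂ)
    (hσ : σ = RingHom.id ℂ ∨ σ = starRingEnd ℂ)
    (EA : Fin n → (Matrix (Fin NA) (Fin NA) ℂ →ₛₗ[σ] Matrix (Fin NA) (Fin NA) ℂ))
    (EB : Fin n → (Matrix (Fin NB) (Fin NB) ℂ →ₛₗ[σ] Matrix (Fin NB) (Fin NB) ℂ))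
    (εA εB : ℝ)
    (hboundA : ∀ σs : Fin n → Matrix (Fin NA) (Fin NA) ℂ,
      (∀ k, IsDensity (σs k)) → ∑ k, hsNorm (EA k (σs k)) ^ 2 ≤ n * εA)
    (hboundB : ∀ σs : Fin n → Matrix (Fin NB) (Fin NB) ℂ,
      (∀ k, IsDensity (σs k)) → ∑ k, hsNorm (EB k (σs k)) ^ 2 ≤ n * εB)
    (ρ : Matrix (Fin NA × Fin NB) (Fin NA × Fin NB) ℂ)
    (hsep : IsSeparableState ρ) :
    ccn ((n : ℂ)⁻¹ • (∑ k, tensorApply (EA k) (EB k) ρ)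
        + (n : ℂ)⁻¹ • (∑ p ∈ Finset.univ.offDiag,
            tensorApply (EA p.1) (EB p.2) (margA ρ ⊗ₖ margB ρ)))
      ≤ Real.sqrt
          ((εA + (n : ℝ)⁻¹ *
              ∑ p ∈ Finset.univ.filter (fun p : Fin n × Fin n => p.1 < p.2),
                2 * (hsInner (EA p.1 (margA ρ)) (EA p.2 (margA ρ))).re)
           * (εB + (n : ℝ)⁻¹ *
              ∑ p ∈ Finset.univ.filter (fun p : Fin n × Fin n => p.1 < p.2),
                2 * (hsInner (EB p.1 (margB ρ)) (EB p.2 (margB ρ))).re)) := by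
  obtain ⟨m, p, ρA, ρB, hp, hpsum, hρA, hρB, rfl⟩ := hsep
  have hσr := RingHom.apply_ofReal_of_eq_id_or_conj hσ
  have hp' : ∀ i, 0 ≤ p i := fun i => (hp i).le
  have hn0 : n ≠ 0 := Nat.one_le_iff_ne_zero.mp hn
  have hvarA := hsNorm_variance_bound hn0 hp' hpsum (a := fun k i => EA k (ρA i))
    fun i => hboundA (fun _ => ρA i) fun _ => hρA i
  have hvarB := hsNorm_variance_bound hn0 hp' hpsum (a := fun k i => EB k (ρB i))
    fun i => hboundB (fun _ => ρB i) fun _ => hρB i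
  simp only [Complex.coe_smul]
  rw [margA_sum_smul_kronecker p ρA ρB fun i => (hρB i).2,
    margB_sum_smul_kronecker p ρA ρB fun i => (hρA i).2, ← smul_add,
    sum_tensorApply_add_offDiag_eq hσr EA EB hpsum ρA ρB,
    ← Complex.ofReal_natCast, ← Complex.ofReal_inv, Complex.coe_smul]
  refine (ccn_smul_sum_sum_add_le (by positivity) hp' _ _ _ _).trans ?_
  simp only [map_sum, LinearMap.map_real_smul_of_apply_ofReal hσr]
  rw [Real.sqrt_mul (le_trans (mul_nonneg (by positivity) (add_nonneg (sum_nonneg fun _ _ =>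
    sum_nonneg fun i _ => mul_nonneg (hp' i) (sq_nonneg _)) (sq_nonneg _))) hvarA)]
  gcongr

/-- Main theorem: a family of separability criteria from transformed operators.
For jointly linear or conjugate-linear superoperators ℰₖ satisfying the stated norm
bounds, every separable state ρ satisfies the CCN inequality for its transform. -/
theorem stmt14_main_theorem {NA NB : ℕ} (hA : 2 ≤ NA) (hB : 2 ≤ NB)
    (n : ℕ) (hn : 1 ≤ n) (σ : ℂ →+* ℂ)
    (hσ : σ = RingHom.id ℂ ∨ σ = starRingEnd ℂ)
    (EA : Fin n → (Matrix (Fin NA) (Fin NA) ℂ →ₛₗ[σ] Matrix (Fin NA) (Fin NA) ℂ))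
    (EB : Fin n → (Matrix (Fin NB) (Fin NB) ℂ →ₛₗ[σ] Matrix (Fin NB) (Fin NB) ℂ))
    (εA εB : ℝ) (hεA : 0 ≤ εA) (hεB : 0 ≤ εB)
    (hboundA : ∀ σs : Fin n → Matrix (Fin NA) (Fin NA) ℂ,
      (∀ k, IsDensity (σs k)) → ∑ k, hsNorm (EA k (σs k)) ^ 2 ≤ n * εA)
    (hboundB : ∀ σs : Fin n → Matrix (Fin NB) (Fin NB) ℂ,
      (∀ k, IsDensity (σs k)) → ∑ k, hsNorm (EB k (σs k)) ^ 2 ≤ n * εB)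
    (ρ : Matrix (Fin NA × Fin NB) (Fin NA × Fin NB) ℂ)
    (hsep : IsSeparableState ρ) :
    ccn ((n : ℂ)⁻¹ • (∑ k, tensorApply (EA k) (EB k) ρ)
        + (n : ℂ)⁻¹ • (∑ p ∈ Finset.univ.offDiag,
            tensorApply (EA p.1) (EB p.2) (margA ρ ⊗ₖ margB ρ)))
      ≤ Real.sqrt
          ((εA + (n : ℝ)⁻¹ *
              ∑ p ∈ Finset.univ.filter (fun p : Fin n × Fin n => p.1 < p.2),
                2 * (hsInner (EA p.1 (margA ρ)) (EA p.2 (margA ρ))).re)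
           * (εB + (n : ℝ)⁻¹ *
              ∑ p ∈ Finset.univ.filter (fun p : Fin n × Fin n => p.1 < p.2),
                2 * (hsInner (EB p.1 (margB ρ)) (EB p.2 (margB ρ))).re)) :=
  stmt14_main_theorem_general n hn σ hσ EA EB εA εB hboundA hboundB ρ hsep
end
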